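/- Let B be an n×n real symmetric positive definite matrix, γ ∈ (0,1), and x ∈ ℝⁿ a nonzero vector with Bx ≠ μ(x)x. Let y ∈ ℝⁿ satisfy (y, Bx − y) = 0 and ‖Bx − y‖ = γ‖Bx − μ(x)x‖. Then there exists a real symmetric matrix T with ‖I − T‖ ≤ γ (operator norm) such that Bx − (I − T)(Bx − μ(x)x) = y; in particular T can be chosen of the form T = I − γH for a Householder reflection H. -/

import Mathlib

noncomputable section

/-- Real matrix-vector multiplication viewed as a map on `EuclideanSpace`. -/
def mulVecEr {n : ℕ} (M : Matrix (Fin n) (Fin n) ℝ) (x : EuclideanSpace ℝ (Fin n)) :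
    EuclideanSpace ℝ (Fin n) :=
  (WithLp.equiv 2 (Fin n → ℝ)).symm (M.mulVec (WithLp.equiv 2 (Fin n → ℝ) x))

/-- The Rayleigh quotient `μ(x) = (x,Bx)/(x,x)`. -/
def RQr {n : ℕ} (B : Matrix (Fin n) (Fin n) ℝ) (x : EuclideanSpace ℝ (Fin n)) : ℝ :=
  (inner ℝ x (mulVecEr B x) : ℝ) / ‖x‖ ^ 2

/-- The Householder reflection `H = I - 2vvᵀ/(v,v)` associated with a vector `v`. -/
def householder {n : ℕ} (v : Fin n → ℝ) : Matrix (Fin n) (Fin n) ℝ :=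
  1 - (2 / dotProduct v v) • Matrix.vecMulVec v v

/-! Put `r = Bx - μ(x) x` and `w = Bx - y`. Since `‖w‖ = γ ‖r‖`, the Householder reflection `H`
exchanging `r` and `γ⁻¹ w` satisfies `γ H r = w`, and `T = I - γ H` works: `‖γ H‖ = γ`.
`H` is a genuine reflection because `w ≠ γ r`: as `(x, r) = 0` we have `(Bx, r) = ‖r‖²`, so
`w = γ r` would give `(y, Bx - y) = γ (1 - γ) ‖r‖² ≠ 0`. -/

open Matrix WithLp

section Householder

variable {n : ℕ}

theorem householder_isSymm (v : Fin n → ℝ) : (householder v).IsSymm :=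
  isSymm_one.sub (IsSymm.smul (transpose_vecMulVec v v) _)

theorem householder_mulVec (v z : Fin n → ℝ) :
    householder v *ᵥ z = z - (2 * (v ⬝ᵥ z) / (v ⬝ᵥ v)) • v := by
  rw [householder, sub_mulVec, one_mulVec, smul_mulVec, vecMulVec_mulVec, op_smul_eq_smul,
    smul_smul, div_mul_eq_mul_div]

theorem householder_mulVec_dotProduct_self (v z : Fin n → ℝ) :
    householder v *ᵥ z ⬝ᵥ householder v *ᵥ z = z ⬝ᵥ z := by
  rw [householder_mulVec]
  by_cases hv : v ⬝ᵥ v = 0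
  · simp [hv]
  simp only [sub_dotProduct, dotProduct_sub, smul_dotProduct, dotProduct_smul, smul_eq_mul,
    dotProduct_comm z v]
  field_simp
  ring

theorem householder_sub_mulVec {a b : Fin n → ℝ} (h : a ⬝ᵥ a = b ⬝ᵥ b) :
    householder (a - b) *ᵥ a = b := by
  by_cases hab : a = b
  -- `householder 0 = 1`, as `2 / 0 = 0`.
  · simp [hab, householder]
  have hd : (a - b) ⬝ᵥ (a - b) ≠ 0 := fun h0 => hab (sub_eq_zero.1 (dotProduct_self_eq_zero.1 h0))
  have hcoef : 2 * ((a - b) ⬝ᵥ a) / ((a - b) ⬝ᵥ (a - b)) = 1 := by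
    rw [div_eq_one_iff_eq hd]
    simp only [sub_dotProduct, dotProduct_sub, dotProduct_comm b a, h]
    ring
  rw [householder_mulVec, hcoef, one_smul, sub_sub_cancel]

end Householder

section EuclideanSpace

variable {n : ℕ}

theorem mulVecEr_eq (M : Matrix (Fin n) (Fin n) ℝ) (z : EuclideanSpace ℝ (Fin n)) :
    mulVecEr M z = toLp 2 (M *ᵥ ofLp z) :=
  rfl

theorem EuclideanSpace.real_norm_sq_eq_dotProduct (z : EuclideanSpace ℝ (Fin n)) :
    ‖z‖ ^ 2 = ofLp z ⬝ᵥ ofLp z := by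
  rw [← real_inner_self_eq_norm_sq, EuclideanSpace.inner_eq_star_dotProduct, star_trivial]

theorem mulVecEr_smul (M : Matrix (Fin n) (Fin n) ℝ) (c : ℝ) (z : EuclideanSpace ℝ (Fin n)) :
    mulVecEr (c • M) z = c • mulVecEr M z := by
  simp [mulVecEr_eq, smul_mulVec]

theorem norm_mulVecEr_householder (v : Fin n → ℝ) (z : EuclideanSpace ℝ (Fin n)) :
    ‖mulVecEr (householder v) z‖ = ‖z‖ := by
  refine (sq_eq_sq₀ (norm_nonneg _) (norm_nonneg _)).1 ?_
  rw [EuclideanSpace.real_norm_sq_eq_dotProduct, EuclideanSpace.real_norm_sq_eq_dotProduct,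
    mulVecEr_eq, ofLp_toLp, householder_mulVec_dotProduct_self]

theorem mulVecEr_householder_sub {a b : EuclideanSpace ℝ (Fin n)} (h : ‖a‖ = ‖b‖) :
    mulVecEr (householder (ofLp (a - b))) a = b := by
  have hdot : ofLp a ⬝ᵥ ofLp a = ofLp b ⬝ᵥ ofLp b := by
    rw [← EuclideanSpace.real_norm_sq_eq_dotProduct, ← EuclideanSpace.real_norm_sq_eq_dotProduct,
      h]
  rw [mulVecEr_eq, ofLp_sub, householder_sub_mulVec hdot, toLp_ofLp]

theorem inner_mulVecEr_sub_RQr_smul_eq_zero (B : Matrix (Fin n) (Fin n) ℝ)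
    (x : EuclideanSpace ℝ (Fin n)) : inner ℝ x (mulVecEr B x - RQr B x • x) = 0 := by
  rcases eq_or_ne x 0 with rfl | hx
  · simp
  rw [inner_sub_right, real_inner_smul_right, RQr, real_inner_self_eq_norm_sq]
  field_simp
  ring

end EuclideanSpace

theorem sub_ne_smul_of_inner_sub_eq_zero {E : Type*} [NormedAddCommGroup E]
    [InnerProductSpace ℝ E] {u x y : E} {c γ : ℝ} (hr : u - c • x ≠ 0) (hγ0 : γ ≠ 0)
    (hγ1 : γ ≠ 1) (hx : inner ℝ x (u - c • x) = 0) (hy : inner ℝ y (u - y) = 0) :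
    u - y ≠ γ • (u - c • x) := by
  set r := u - c • x with hr_def
  intro h
  have hur : inner ℝ u r = ‖r‖ ^ 2 := by
    rw [show u = c • x + r by rw [hr_def]; abel, inner_add_left, real_inner_smul_left, hx,
      real_inner_self_eq_norm_sq, mul_zero, zero_add]
  have hyr : y = u - γ • r := by rw [← h, sub_sub_cancel]
  rw [hyr, sub_sub_cancel, real_inner_smul_right, inner_sub_left, real_inner_smul_left, hur,
    real_inner_self_eq_norm_sq] at hy
  have : γ * (1 - γ) * ‖r‖ ^ 2 ≠ 0 :=
    mul_ne_zero (mul_ne_zero hγ0 (sub_ne_zero.2 hγ1.symm)) (pow_ne_zero _ (norm_ne_zero_iff.2 hr))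
  exact this (by linear_combination hy)

theorem preconditioner_realizing_cone_point_general
    {n : ℕ} (B : Matrix (Fin n) (Fin n) ℝ)
    (γ : ℝ) (hγ0 : 0 < γ) (hγ1 : γ < 1)
    (x : EuclideanSpace ℝ (Fin n))
    (hres : mulVecEr B x ≠ RQr B x • x)
    (y : EuclideanSpace ℝ (Fin n))
    (horth : (inner ℝ y (mulVecEr B x - y) : ℝ) = 0)
    (hlen : ‖mulVecEr B x - y‖ = γ * ‖mulVecEr B x - RQr B x • x‖) :
    ∃ T : Matrix (Fin n) (Fin n) ℝ, T.IsSymm ∧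
      (∀ z : EuclideanSpace ℝ (Fin n), ‖mulVecEr (1 - T) z‖ ≤ γ * ‖z‖) ∧
      mulVecEr B x - mulVecEr (1 - T) (mulVecEr B x - RQr B x • x) = y ∧
      ∃ v : Fin n → ℝ, v ≠ 0 ∧ T = 1 - γ • householder v := by
  set r := mulVecEr B x - RQr B x • x
  set w := mulVecEr B x - y
  have hwr : w ≠ γ • r := sub_ne_smul_of_inner_sub_eq_zero (sub_ne_zero.2 hres) hγ0.ne' hγ1.ne
    (inner_mulVecEr_sub_RQr_smul_eq_zero B x) horth
  set v := ofLp (r - γ⁻¹ • w)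
  have hv : v ≠ 0 := fun h => hwr <| by
    rw [ofLp_eq_zero, sub_eq_zero] at h
    rw [h, smul_inv_smul₀ hγ0.ne']
  have hHr : mulVecEr (householder v) r = γ⁻¹ • w := mulVecEr_householder_sub <| by
    rw [norm_smul, hlen, norm_inv, Real.norm_of_nonneg hγ0.le, inv_mul_cancel_left₀ hγ0.ne']
  have hIT : 1 - (1 - γ • householder v) = γ • householder v := sub_sub_cancel _ _
  refine ⟨_, isSymm_one.sub ((householder_isSymm v).smul γ), fun z => ?_, ?_, v, hv, rfl⟩
  · rw [hIT, mulVecEr_smul, norm_smul, norm_mulVecEr_householder, Real.norm_of_nonneg hγ0.le]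
  · rw [hIT, mulVecEr_smul, hHr, smul_inv_smul₀ hγ0.ne', sub_sub_cancel]

/-- Any point `y` on the cone boundary (suitably scaled) is realized by an admissible
preconditioner: there is a symmetric `T` with `‖I - T‖ ≤ γ`, of the form `I - γH` for a
Householder reflection `H`, such that `Bx - (I - T)(Bx - μ(x)x) = y`. -/
theorem preconditioner_realizing_cone_point
    {n : ℕ} (B : Matrix (Fin n) (Fin n) ℝ) (hB : B.PosDef)
    (γ : ℝ) (hγ0 : 0 < γ) (hγ1 : γ < 1)
    (x : EuclideanSpace ℝ (Fin n)) (hx : x ≠ 0)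
    (hres : mulVecEr B x ≠ RQr B x • x)
    (y : EuclideanSpace ℝ (Fin n))
    (horth : (inner ℝ y (mulVecEr B x - y) : ℝ) = 0)
    (hlen : ‖mulVecEr B x - y‖ = γ * ‖mulVecEr B x - RQr B x • x‖) :
    ∃ T : Matrix (Fin n) (Fin n) ℝ, T.IsSymm ∧
      (∀ z : EuclideanSpace ℝ (Fin n), ‖mulVecEr (1 - T) z‖ ≤ γ * ‖z‖) ∧
      mulVecEr B x - mulVecEr (1 - T) (mulVecEr B x - RQr B x • x) = y ∧
      ∃ v : Fin n → ℝ, v ≠ 0 ∧ T = 1 - γ • householder v :=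
  preconditioner_realizing_cone_point_general B γ hγ0 hγ1 x hres y horth hlen
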